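/- arXiv:2110.10676 — 5 statements merged into one kernel-verified Lean document; each statement's English description precedes it below -/
import Mathlib

section
/- Let X be a finite connected poset and F a field with char(F) ≠ 2. Then every bijective F-linear map φ: I(X,F) → I(X,F) that preserves idempotents is either an automorphism of I(X,F) or an anti-automorphism of I(X,F). -/
/-!
Over a field with `2 ≠ 0`, the images `φ(e_x)` of the diagonal idempotents are orthogonal
idempotents. Each has a single `1` on its diagonal, at some `θ x`, and conjugating by the unit
`∑ e_{θx} φ(e_x)` reduces to the case `φ(e_x) = e_{θx}`. If `e` is idempotent and `a` lies in its
Peirce `½`-space (`ea + ae = a`, `a² = 0`), then `e ± a` are idempotents, so `φ(a)` lies in the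
Peirce `½`-space of `φ(e)`. This forces `φ(e_xy)` to be a nonzero multiple of `e_{θx,θy}` or of
`e_{θy,θx}`, and the same argument applied to sums of matrix units shows that two comparable pairs
sharing an element are oriented the same way. Connectedness makes the orientation global: `φ` is
multiplicative on matrix units if `θ` preserves every `x < y`, and antimultiplicative if it
reverses all of them.
-/

open IncidenceAlgebra

/-- A poset is connected if any two elements can be joined by a sequence of elements
in which consecutive elements are comparable. -/
def PosetConnected (X : Type*) [PartialOrder X] : Prop :=
  ∀ x y : X, Relation.ReflTransGen (fun a b : X => a ≤ b ∨ b ≤ a) x y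

section IdempotentPreserver

variable {F A B : Type*} [Field F] [Ring A] [Ring B] [Module F A] [Module F B]

lemma eq_zero_of_add_self_eq_zero {M : Type*} [AddCommGroup M] [Module F M] (h2 : (2 : F) ≠ 0)
    {m : M} (h : m + m = 0) : m = 0 := by
  rw [← two_smul F m] at h
  exact (smul_eq_zero.1 h).resolve_left h2

lemma IsIdempotentElem.mul_eq_zero_of_anticommute_of_two_ne_zero (h2 : (2 : F) ≠ 0) {p q : B}
    (hp : IsIdempotentElem p) (hpq : p * q + q * p = 0) : p * q = 0 := by
  have hl : p * q + p * q * p = 0 := by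
    simpa [mul_add, ← mul_assoc, hp.eq] using congr(p * $hpq)
  have hr : p * q * p + q * p = 0 := by
    simpa [add_mul, mul_assoc, hp.eq] using congr($hpq * p)
  refine eq_zero_of_add_self_eq_zero h2 ?_
  calc p * q + p * q = (p * q + p * q * p) - (p * q * p + q * p) + (p * q + q * p) := by abel
    _ = 0 := by rw [hl, hr, hpq, sub_zero, add_zero]

variable (φ : A →ₗ[F] B)

lemma OrthogonalIdempotents.map_of_isIdempotentElem
    (hφ : ∀ a, IsIdempotentElem a → IsIdempotentElem (φ a)) (h2 : (2 : F) ≠ 0)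
    {ι : Type*} {e : ι → A} (he : OrthogonalIdempotents e) :
    OrthogonalIdempotents (φ ∘ e) where
  idem i := hφ _ (he.idem i)
  ortho i j hij := by
    have hsum := hφ _ ((he.idem i).add (he.idem j)
      (by rw [he.ortho hij, he.ortho hij.symm, add_zero]))
    rw [map_add, (hφ _ (he.idem i)).add_iff (hφ _ (he.idem j))] at hsum
    exact (hφ _ (he.idem i)).mul_eq_zero_of_anticommute_of_two_ne_zero h2 hsum

lemma map_peirce_half
    (hφ : ∀ a, IsIdempotentElem a → IsIdempotentElem (φ a)) (h2 : (2 : F) ≠ 0) {e a : A}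
    (he : IsIdempotentElem e) (hea : e * a + a * e = a) (ha : a * a = 0) :
    φ a * φ a = 0 ∧ φ e * φ a + φ a * φ e = φ a := by
  have hplus : IsIdempotentElem (e + a) := by
    rw [IsIdempotentElem, ← sub_eq_zero]
    calc (e + a) * (e + a) - (e + a) = (e * e - e) + (e * a + a * e - a) + a * a := by noncomm_ring
      _ = 0 := by rw [he.eq, hea, ha]; abel
  have hminus : IsIdempotentElem (e - a) := by
    rw [IsIdempotentElem, ← sub_eq_zero]
    calc (e - a) * (e - a) - (e - a) = (e * e - e) - (e * a + a * e - a) + a * a := by noncomm_ring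
      _ = 0 := by rw [he.eq, hea, ha]; abel
  have h₀ := (hφ _ he).eq
  have h₁ := (hφ _ hplus).eq
  have h₂ := (hφ _ hminus).eq
  rw [map_add] at h₁
  rw [map_sub] at h₂
  set p := φ e
  set g := φ a
  have hgg : g * g = 0 := eq_zero_of_add_self_eq_zero h2 <| by
    calc g * g + g * g = ((p + g) * (p + g) - (p + g)) + ((p - g) * (p - g) - (p - g))
          - (p * p - p) - (p * p - p) := by noncomm_ring
      _ = 0 := by rw [h₀, h₁, h₂]; abel
  refine ⟨hgg, ?_⟩
  rw [← sub_eq_zero]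
  calc p * g + g * p - g = ((p + g) * (p + g) - (p + g)) - (p * p - p) - g * g := by noncomm_ring
    _ = 0 := by rw [h₀, h₁, hgg]; abel

lemma map_anticommute_of_peirce_half
    (hφ : ∀ a, IsIdempotentElem a → IsIdempotentElem (φ a)) (h2 : (2 : F) ≠ 0) {e a b : A}
    (he : IsIdempotentElem e) (hea : e * a + a * e = a) (heb : e * b + b * e = b)
    (ha : a * a = 0) (hb : b * b = 0) (hab : a * b + b * a = 0) :
    φ a * φ b + φ b * φ a = 0 := by
  have hsq := (map_peirce_half φ hφ h2 he (a := a + b)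
    (calc e * (a + b) + (a + b) * e = (e * a + a * e) + (e * b + b * e) := by noncomm_ring
      _ = a + b := by rw [hea, heb])
    (calc (a + b) * (a + b) = a * a + b * b + (a * b + b * a) := by noncomm_ring
      _ = 0 := by rw [ha, hb, hab, add_zero, add_zero])).1
  rw [map_add] at hsq
  calc φ a * φ b + φ b * φ a = (φ a + φ b) * (φ a + φ b) - φ a * φ a - φ b * φ b := by noncomm_ring
    _ = 0 := by
      rw [hsq, (map_peirce_half φ hφ h2 he hea ha).1, (map_peirce_half φ hφ h2 he heb hb).1,
        sub_zero, sub_zero]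

end IdempotentPreserver

lemma PosetConnected.iff_of_lt {X : Type*} [PartialOrder X] (hconn : PosetConnected X)
    {P : X → X → Prop} (hfork : ∀ a b c, a < b → a < c → (P a b ↔ P a c))
    (hcofork : ∀ a b c, a < c → b < c → (P a c ↔ P b c)) :
    ∀ ⦃a b c d : X⦄, a < b → c < d → (P a b ↔ P c d) := by
  have hshare : ∀ {a b c d : X}, a < b → c < d → (a = c ∨ a = d ∨ b = c ∨ b = d) →
      (P a b ↔ P c d) := by
    rintro a b c d hab hcd (rfl | rfl | rfl | rfl)
    · exact hfork a b d hab hcd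
    · exact (hcofork c a b (hcd.trans hab) hab).symm.trans (hfork c a b hcd (hcd.trans hab)).symm
    · exact (hfork a b d hab (hab.trans hcd)).trans (hcofork a b d (hab.trans hcd) hcd)
    · exact hcofork a c b hab hcd
  intro a b c d hab hcd
  suffices ∀ w, Relation.ReflTransGen (fun a b : X => a ≤ b ∨ b ≤ a) a w →
      ∀ c d, c < d → (w = c ∨ w = d) → (P a b ↔ P c d) from
    this c (hconn a c) c d hcd (Or.inl rfl)
  intro w hw
  induction hw with
  | refl =>
    rintro c d hcd (rfl | rfl)
    · exact hshare hab hcd (Or.inl rfl)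
    · exact hshare hab hcd (Or.inr (Or.inl rfl))
  | @tail v w _ hvw ih =>
    rcases eq_or_ne v w with rfl | hne
    · exact ih
    rintro c d hcd hw
    obtain ⟨s, t, hst, hvst, hwst⟩ : ∃ s t, s < t ∧ (v = s ∨ v = t) ∧ (w = s ∨ w = t) := by
      rcases hvw with h | h
      · exact ⟨v, w, h.lt_of_ne hne, Or.inl rfl, Or.inr rfl⟩
      · exact ⟨w, v, h.lt_of_ne hne.symm, Or.inr rfl, Or.inl rfl⟩
    refine (ih s t hst hvst).trans (hshare hst hcd ?_)
    rcases hwst with rfl | rfl <;> rcases hw with rfl | rfl <;> simp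

namespace IncidenceAlgebra

variable {𝕜 α : Type*}

section Basic
variable [PartialOrder α]

lemma coe_sum [AddCommMonoid 𝕜] {ι : Type*} (s : Finset ι) (f : ι → IncidenceAlgebra 𝕜 α) :
    ⇑(∑ i ∈ s, f i) = ∑ i ∈ s, ⇑(f i) :=
  map_sum ({ toFun := (⇑), map_zero' := coe_zero, map_add' := coe_add } :
    IncidenceAlgebra 𝕜 α →+ α → α → 𝕜) f s

variable [LocallyFiniteOrder α]

lemma mul_apply_self [Semiring 𝕜] (f g : IncidenceAlgebra 𝕜 α) (a : α) :
    (f * g) a a = f a a * g a a := by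
  rw [mul_apply, Finset.Icc_self, Finset.sum_singleton]

variable [DecidableEq α]

lemma pow_apply_eq_zero_of_card_Icc_le [Semiring 𝕜] {f : IncidenceAlgebra 𝕜 α}
    (hf : ∀ a, f a a = 0) (n : ℕ) (a b : α) (h : (Finset.Icc a b).card ≤ n) : (f ^ n) a b = 0 := by
  induction n generalizing a b with
  | zero =>
    have hab : ¬a ≤ b := Finset.Icc_eq_empty_iff.1 (Finset.card_eq_zero.1 (Nat.le_zero.1 h))
    simp [ne_of_not_le hab]
  | succ n ih =>
    rw [pow_succ', mul_apply]
    refine Finset.sum_eq_zero fun c hc => ?_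
    obtain ⟨hac, hcb⟩ := Finset.mem_Icc.1 hc
    rcases hac.eq_or_lt with rfl | hac
    · rw [hf, zero_mul]
    · have := Finset.card_lt_card (Finset.Icc_ssubset_Icc_left (hac.le.trans hcb) hac le_rfl)
      rw [ih c b (by omega), mul_zero]

variable [Fintype α]

lemma isNilpotent_of_forall_apply_self_eq_zero [Semiring 𝕜] {f : IncidenceAlgebra 𝕜 α}
    (hf : ∀ a, f a a = 0) : IsNilpotent f :=
  ⟨Fintype.card α, ext fun a b _ =>
    pow_apply_eq_zero_of_card_Icc_le hf _ a b (Finset.card_le_univ _)⟩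

lemma isUnit_of_forall_apply_self_eq_one [Ring 𝕜] {f : IncidenceAlgebra 𝕜 α}
    (hf : ∀ a, f a a = 1) : IsUnit f := by
  have := (isNilpotent_of_forall_apply_self_eq_zero (f := f - 1)
    fun a => by simp [sub_apply, hf]).isUnit_one_add
  rwa [add_sub_cancel] at this

/-- An idempotent with zero diagonal is nilpotent, hence zero; orthogonality makes the positions
of the diagonal `1`s distinct. -/
lemma _root_.OrthogonalIdempotents.exists_injective_apply_self_eq_one [Ring 𝕜] [IsDomain 𝕜]
    {ι : Type*} {f : ι → IncidenceAlgebra 𝕜 α} (hf : OrthogonalIdempotents f)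
    (hne : ∀ i, f i ≠ 0) : ∃ θ : ι → α, Function.Injective θ ∧ ∀ i, f i (θ i) (θ i) = 1 := by
  have hdiag (i : ι) (a : α) : f i a a = 0 ∨ f i a a = 1 :=
    IsIdempotentElem.iff_eq_zero_or_one.1 <| by
      rw [IsIdempotentElem, ← mul_apply_self, (hf.idem i).eq]
  have hone (i : ι) : ∃ a, f i a a = 1 := by
    by_contra! h
    exact hne i <| (hf.idem i).eq_zero_of_isNilpotent <|
      isNilpotent_of_forall_apply_self_eq_zero fun a => (hdiag i a).resolve_right (h a)
  choose θ hθ using hone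
  refine ⟨θ, fun i j hij => by_contra fun hne' => ?_, hθ⟩
  have := congr($(hf.ortho hne') (θ i) (θ i))
  rw [mul_apply_self, hθ, hij, hθ] at this
  simp at this

end Basic

section Single
variable [PartialOrder α] [DecidableEq α] [DecidableLE α] {x y z w : α}

def single [Zero 𝕜] (x y : α) (c : 𝕜) : IncidenceAlgebra 𝕜 α :=
  ⟨fun a b => if x ≤ y ∧ a = x ∧ b = y then c else 0,
    fun _ _ hab => if_neg (by rintro ⟨h, rfl, rfl⟩; exact hab h)⟩

section Zero
variable [Zero 𝕜] {c : 𝕜}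

@[simp] lemma single_apply (x y : α) (c : 𝕜) (a b : α) :
    single x y c a b = if x ≤ y ∧ a = x ∧ b = y then c else 0 := rfl

@[simp] lemma single_zero (x y : α) : single x y (0 : 𝕜) = 0 := by
  ext; simp

lemma single_of_not_le (h : ¬x ≤ y) (c : 𝕜) : single x y c = 0 := by
  ext; simp [h]

lemma single_eq_zero_iff (h : x ≤ y) : single x y c = 0 ↔ c = 0 :=
  ⟨fun h0 => by simpa [h] using congr($h0 x y), fun hc => by ext; simp [hc]⟩

end Zero

section Semiring
variable [Semiring 𝕜]

lemma sum_smul_single [Fintype α] (f : IncidenceAlgebra 𝕜 α) :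
    ∑ p : α × α, f p.1 p.2 • single p.1 p.2 1 = f := by
  ext a b hab
  rw [coe_sum, Finset.sum_apply, Finset.sum_apply, Finset.sum_eq_single (a, b)] <;> aesop

variable [LocallyFiniteOrder α]

lemma single_mul_single (hxy : x ≤ y) (hyz : y ≤ z) (c d : 𝕜) :
    single x y c * single y z d = single x z (c * d) := by
  ext a b hab
  rw [mul_apply, Finset.sum_eq_single y]
  · by_cases ha : a = x <;> by_cases hb : b = z <;> simp [hxy, hyz, hxy.trans hyz, ha, hb]
  · intro t _ hty; simp [hty]
  · intro hy
    by_cases ha : a = x <;> by_cases hb : b = z <;> simp_all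

lemma single_mul_single_of_ne (h : y ≠ z) (c d : 𝕜) :
    single x y c * single z w d = 0 := by
  ext a b
  refine (Finset.sum_eq_zero fun t _ => ?_).trans (zero_apply a b).symm
  by_cases hty : t = y <;> simp [hty, h]

lemma single_mul_single_eq_ite (hxy : x ≤ y) (hzw : z ≤ w) (c d : 𝕜) :
    single x y c * single z w d = if y = z then single x w (c * d) else 0 := by
  split_ifs with hyz
  · subst hyz; exact single_mul_single hxy hzw c d
  · exact single_mul_single_of_ne hyz c d

lemma isIdempotentElem_single_self : IsIdempotentElem (single x x (1 : 𝕜)) := by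
  rw [IsIdempotentElem, single_mul_single le_rfl le_rfl, mul_one]

lemma orthogonalIdempotents_single_self :
    OrthogonalIdempotents fun x : α => single x x (1 : 𝕜) :=
  ⟨fun _ => isIdempotentElem_single_self, fun _ _ hxy => single_mul_single_of_ne hxy 1 1⟩

lemma single_self_one_mul_apply (f : IncidenceAlgebra 𝕜 α) (a b : α) :
    (single z z (1 : 𝕜) * f) a b = if a = z then f a b else 0 := by
  rw [mul_apply]
  split_ifs with ha
  · by_cases hab : a ≤ b
    · rw [Finset.sum_eq_single a] <;> aesop
    · simp [apply_eq_zero_of_not_le hab, Finset.Icc_eq_empty hab]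
  · exact Finset.sum_eq_zero fun t _ => by simp [ha]

lemma mul_single_self_one_apply (f : IncidenceAlgebra 𝕜 α) (a b : α) :
    (f * single z z (1 : 𝕜)) a b = if b = z then f a b else 0 := by
  rw [mul_apply]
  split_ifs with hb
  · by_cases hab : a ≤ b
    · rw [Finset.sum_eq_single b] <;> aesop
    · simp [apply_eq_zero_of_not_le hab, Finset.Icc_eq_empty hab]
  · exact Finset.sum_eq_zero fun t _ => by simp [hb]

end Semiring

section Ring
variable [Ring 𝕜] [LocallyFiniteOrder α]

lemma eq_single_add_single_of_peirce_half {g : IncidenceAlgebra 𝕜 α} {p q : α} (hpq : p ≠ q)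
    (hp : single p p 1 * g + g * single p p 1 = g) (hq : single q q 1 * g + g * single q q 1 = g) :
    g = single p q (g p q) + single q p (g q p) := by
  ext a b hab
  have hp' := congr($hp a b)
  have hq' := congr($hq a b)
  simp only [add_apply, single_self_one_mul_apply, mul_single_self_one_apply] at hp' hq'
  simp only [add_apply, single_apply]
  by_cases hap : a = p <;> by_cases hbp : b = p <;> by_cases haq : a = q <;>
    by_cases hbq : b = q <;> simp_all

/-- The conjugating unit is `∑ i, eᵢ fᵢ` where `eᵢ = single (θ i) (θ i) 1`:
it intertwines `fᵢ` with `eᵢ`, and its diagonal is `1`. -/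
lemma _root_.OrthogonalIdempotents.exists_unit_conj_single [Fintype α] {ι : Type*} [Fintype ι]
    {f : ι → IncidenceAlgebra 𝕜 α} (hf : OrthogonalIdempotents f) {θ : ι → α}
    (hθ : Function.Bijective θ) (hone : ∀ i, f i (θ i) (θ i) = 1) :
    ∃ u : (IncidenceAlgebra 𝕜 α)ˣ,
      ∀ i, (u : IncidenceAlgebra 𝕜 α) * f i * ↑u⁻¹ = single (θ i) (θ i) (1 : 𝕜) := by
  set v := ∑ j, single (θ j) (θ j) 1 * f j
  have hv (i : ι) : v * f i = single (θ i) (θ i) 1 * v := by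
    rw [Finset.sum_mul, Finset.mul_sum, Finset.sum_eq_single i (fun j _ hji => by
        rw [mul_assoc, hf.ortho hji, mul_zero]) (by simp),
      Finset.sum_eq_single i (fun j _ hji => by
        rw [← mul_assoc, single_mul_single_of_ne (hθ.1.ne hji.symm), zero_mul]) (by simp),
      mul_assoc, (hf.idem i).eq, ← mul_assoc, isIdempotentElem_single_self.eq]
  have hunit : IsUnit v := isUnit_of_forall_apply_self_eq_one fun a => by
    obtain ⟨i, rfl⟩ := hθ.2 a
    rw [coe_sum, Finset.sum_apply, Finset.sum_apply, Finset.sum_eq_single i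
      (fun j _ hji => by rw [single_self_one_mul_apply, if_neg (hθ.1.ne hji.symm)]) (by simp),
      single_self_one_mul_apply, if_pos rfl, hone]
  refine ⟨hunit.unit, fun i => ?_⟩
  rw [IsUnit.unit_spec, hv, mul_assoc, IsUnit.mul_val_inv, mul_one]

end Ring

section Criterion
variable [CommSemiring 𝕜] [LocallyFiniteOrder α] [Fintype α] {B : Type*} [Semiring B] [Algebra 𝕜 B]

lemma map_mul_of_map_single {ψ : IncidenceAlgebra 𝕜 α →ₗ[𝕜] B}
    (hdiag : ∀ x, ψ (single x x 1) * ψ (single x x 1) = ψ (single x x 1))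
    (hjordan : ∀ x y z, x ≤ y → y ≤ z → x < z →
      ψ (single x y 1) * ψ (single y z 1) + ψ (single y z 1) * ψ (single x y 1) = ψ (single x z 1))
    (hzero : ∀ x y z w, x ≤ y → z ≤ w → y ≠ z → ψ (single x y 1) * ψ (single z w 1) = 0)
    (f g : IncidenceAlgebra 𝕜 α) : ψ (f * g) = ψ f * ψ g := by
  have hbase : ∀ x y z w : α,
      ψ (single x y 1 * single z w 1) = ψ (single x y 1) * ψ (single z w 1) := by
    intro x y z w
    by_cases hxy : x ≤ y
    swap; · simp [single_of_not_le hxy]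
    by_cases hzw : z ≤ w
    swap; · simp [single_of_not_le hzw]
    by_cases hyz : y = z
    swap; · rw [single_mul_single_of_ne hyz, map_zero, hzero x y z w hxy hzw hyz]
    subst hyz
    rw [single_mul_single hxy hzw, one_mul]
    rcases (hxy.trans hzw).eq_or_lt with rfl | hxw
    · obtain rfl := le_antisymm hxy hzw
      exact (hdiag x).symm
    · rw [← hjordan x y w hxy hzw hxw, hzero y w x y hzw hxy hxw.ne', add_zero]
  rw [← sum_smul_single f, ← sum_smul_single g, Finset.sum_mul_sum]
  simp only [smul_mul_smul_comm, map_sum, map_smul, hbase]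
  rw [Finset.sum_mul_sum]
  simp only [smul_mul_smul_comm]

end Criterion

end Single

variable {F X : Type*} [Field F] [PartialOrder X] [LocallyFiniteOrder X] [DecidableEq X]
  [DecidableLE X]

structure NormalizedIdempotentPreserver (ψ : IncidenceAlgebra F X →ₗ[F] IncidenceAlgebra F X)
    (θ : X → X) : Prop where
  map_isIdempotentElem : ∀ a, IsIdempotentElem a → IsIdempotentElem (ψ a)
  injective : Function.Injective ψ
  injective_θ : Function.Injective θ
  map_single_self : ∀ x, ψ (single x x 1) = single (θ x) (θ x) 1

namespace NormalizedIdempotentPreserver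

variable {ψ : IncidenceAlgebra F X →ₗ[F] IncidenceAlgebra F X} {θ : X → X} {x y z : X}

lemma map_single_ne_zero (hN : NormalizedIdempotentPreserver ψ θ) (hxy : x ≤ y) :
    ψ (single x y 1) ≠ 0 := by
  rw [Ne, ← map_zero ψ, hN.injective.eq_iff, single_eq_zero_iff hxy]
  exact one_ne_zero

lemma map_single_peirce_half_left (hN : NormalizedIdempotentPreserver ψ θ)
    (h2 : (2 : F) ≠ 0) (hxy : x < y) :
    single (θ x) (θ x) 1 * ψ (single x y 1) + ψ (single x y 1) * single (θ x) (θ x) 1 =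
      ψ (single x y 1) := by
  rw [← hN.map_single_self]
  exact (map_peirce_half ψ hN.map_isIdempotentElem h2 isIdempotentElem_single_self
    (by simp [single_mul_single_eq_ite, hxy.le, hxy.ne'])
    (by simp [single_mul_single_eq_ite, hxy.le, hxy.ne'])).2

lemma map_single_peirce_half_right (hN : NormalizedIdempotentPreserver ψ θ)
    (h2 : (2 : F) ≠ 0) (hxy : x < y) :
    single (θ y) (θ y) 1 * ψ (single x y 1) + ψ (single x y 1) * single (θ y) (θ y) 1 =
      ψ (single x y 1) := by
  rw [← hN.map_single_self]
  exact (map_peirce_half ψ hN.map_isIdempotentElem h2 isIdempotentElem_single_self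
    (by simp [single_mul_single_eq_ite, hxy.le, hxy.ne'])
    (by simp [single_mul_single_eq_ite, hxy.le, hxy.ne'])).2

lemma map_single_eq (hN : NormalizedIdempotentPreserver ψ θ) (h2 : (2 : F) ≠ 0) (hxy : x < y) :
    ψ (single x y 1) = single (θ x) (θ y) (ψ (single x y 1) (θ x) (θ y)) +
      single (θ y) (θ x) (ψ (single x y 1) (θ y) (θ x)) :=
  eq_single_add_single_of_peirce_half (hN.injective_θ.ne hxy.ne)
    (hN.map_single_peirce_half_left h2 hxy)
    (hN.map_single_peirce_half_right h2 hxy)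

lemma lt_or_lt (hN : NormalizedIdempotentPreserver ψ θ) (h2 : (2 : F) ≠ 0) (hxy : x < y) :
    θ x < θ y ∨ θ y < θ x := by
  by_contra! h
  have hne := hN.injective_θ.ne hxy.ne
  apply hN.map_single_ne_zero hxy.le
  rw [hN.map_single_eq h2 hxy, single_of_not_le fun hle => h.1 (hle.lt_of_ne hne),
    single_of_not_le fun hle => h.2 (hle.lt_of_ne hne.symm), add_zero]

lemma exists_map_single_eq_of_le (hN : NormalizedIdempotentPreserver ψ θ) (h2 : (2 : F) ≠ 0)
    (hxy : x ≤ y) (hθ : θ x ≤ θ y) : ∃ c ≠ 0, ψ (single x y 1) = single (θ x) (θ y) c := by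
  suffices h : ψ (single x y 1) = single (θ x) (θ y) (ψ (single x y 1) (θ x) (θ y)) from
    ⟨_, fun h0 => hN.map_single_ne_zero hxy (by rw [h, h0, single_zero]), h⟩
  rcases hxy.eq_or_lt with rfl | hxy
  · simp [hN.map_single_self]
  · have h := hN.map_single_eq h2 hxy
    rwa [single_of_not_le (hθ.lt_of_ne (hN.injective_θ.ne hxy.ne)).not_ge, add_zero] at h

lemma exists_map_single_eq_of_ge (hN : NormalizedIdempotentPreserver ψ θ) (h2 : (2 : F) ≠ 0)
    (hxy : x ≤ y) (hθ : θ y ≤ θ x) : ∃ c ≠ 0, ψ (single x y 1) = single (θ y) (θ x) c := by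
  suffices h : ψ (single x y 1) = single (θ y) (θ x) (ψ (single x y 1) (θ y) (θ x)) from
    ⟨_, fun h0 => hN.map_single_ne_zero hxy (by rw [h, h0, single_zero]), h⟩
  rcases hxy.eq_or_lt with rfl | hxy
  · simp [hN.map_single_self]
  · have h := hN.map_single_eq h2 hxy
    rwa [single_of_not_le (hθ.lt_of_ne (hN.injective_θ.ne hxy.ne')).not_ge, zero_add] at h

lemma map_single_anticommute_left (hN : NormalizedIdempotentPreserver ψ θ) (h2 : (2 : F) ≠ 0)
    (hxy : x < y) (hxz : x < z) :
    ψ (single x y 1) * ψ (single x z 1) + ψ (single x z 1) * ψ (single x y 1) = 0 :=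
  map_anticommute_of_peirce_half ψ hN.map_isIdempotentElem h2
    (isIdempotentElem_single_self (x := x)) (by simp [single_mul_single_eq_ite, hxy.le, hxy.ne'])
    (by simp [single_mul_single_eq_ite, hxz.le, hxz.ne'])
    (by simp [single_mul_single_eq_ite, hxy.le, hxy.ne'])
    (by simp [single_mul_single_eq_ite, hxz.le, hxz.ne'])
    (by simp [single_mul_single_eq_ite, hxy.le, hxz.le, hxy.ne', hxz.ne'])

lemma map_single_anticommute_right (hN : NormalizedIdempotentPreserver ψ θ) (h2 : (2 : F) ≠ 0)
    (hyx : y < x) (hzx : z < x) :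
    ψ (single y x 1) * ψ (single z x 1) + ψ (single z x 1) * ψ (single y x 1) = 0 :=
  map_anticommute_of_peirce_half ψ hN.map_isIdempotentElem h2
    (isIdempotentElem_single_self (x := x)) (by simp [single_mul_single_eq_ite, hyx.le, hyx.ne'])
    (by simp [single_mul_single_eq_ite, hzx.le, hzx.ne'])
    (by simp [single_mul_single_eq_ite, hyx.le, hyx.ne'])
    (by simp [single_mul_single_eq_ite, hzx.le, hzx.ne'])
    (by simp [single_mul_single_eq_ite, hyx.le, hzx.le, hyx.ne', hzx.ne'])

/-- `e_y + e_xy` is idempotent and `e_yz + e_xz` lies in its Peirce `½`-space; the cross terms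
other than the wanted one vanish by the previous relations. -/
lemma map_single_jordan_of_lt_of_lt (hN : NormalizedIdempotentPreserver ψ θ)
    (h2 : (2 : F) ≠ 0) (hxy : x < y) (hyz : y < z) :
    ψ (single x y 1) * ψ (single y z 1) + ψ (single y z 1) * ψ (single x y 1) =
      ψ (single x z 1) := by
  have hxz := hxy.trans hyz
  have hpeirce := (map_peirce_half ψ hN.map_isIdempotentElem h2
    (e := single y y 1 + single x y 1) (a := single y z 1 + single x z 1)
    (by simp [IsIdempotentElem, mul_add, add_mul, single_mul_single_eq_ite, hxy.le, hxy.ne'])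
    (by simp [mul_add, add_mul, single_mul_single_eq_ite, hxy.le, hyz.le, hxz.le, hxy.ne',
      hyz.ne', hxz.ne'])
    (by simp [mul_add, add_mul, single_mul_single_eq_ite, hyz.le, hxz.le, hyz.ne', hxz.ne'])).2
  rw [map_add, map_add, hN.map_single_self] at hpeirce
  have hyk : single (θ y) (θ y) 1 * ψ (single x z 1) + ψ (single x z 1) * single (θ y) (θ y) 1 =
      0 := by
    rw [hN.map_single_eq h2 hxz]
    simp [mul_add, add_mul, single_mul_single_of_ne, hN.injective_θ.ne, hxy.ne, hxy.ne', hyz.ne,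
      hyz.ne']
  set e := single (θ y) (θ y) (1 : F)
  set g := ψ (single x y 1)
  set h := ψ (single y z 1)
  set k := ψ (single x z 1)
  calc g * h + h * g = ((e + g) * (h + k) + (h + k) * (e + g)) - (e * h + h * e) - (e * k + k * e)
        - (g * k + k * g) := by noncomm_ring
    _ = k := by
      rw [hpeirce, hN.map_single_peirce_half_left h2 hyz, hyk,
        hN.map_single_anticommute_left h2 hxy hxz]
      abel

lemma map_single_jordan (hN : NormalizedIdempotentPreserver ψ θ) (h2 : (2 : F) ≠ 0)
    (hxy : x ≤ y) (hyz : y ≤ z) (hxz : x < z) :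
    ψ (single x y 1) * ψ (single y z 1) + ψ (single y z 1) * ψ (single x y 1) =
      ψ (single x z 1) := by
  rcases hxy.eq_or_lt with rfl | hxy
  · rw [hN.map_single_self]
    exact hN.map_single_peirce_half_left h2 hxz
  rcases hyz.eq_or_lt with rfl | hyz
  · rw [hN.map_single_self, add_comm]
    exact hN.map_single_peirce_half_right h2 hxy
  exact hN.map_single_jordan_of_lt_of_lt h2 hxy hyz

lemma map_lt_of_map_lt_left (hN : NormalizedIdempotentPreserver ψ θ) (h2 : (2 : F) ≠ 0)
    (hxy : x < y) (hxz : x < z) (h : θ x < θ y) : θ x < θ z := by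
  by_contra hxz'
  have hzx := (hN.lt_or_lt h2 hxz).resolve_left hxz'
  obtain ⟨c, hc, hg⟩ := hN.exists_map_single_eq_of_le h2 hxy.le h.le
  obtain ⟨d, hd, hk⟩ := hN.exists_map_single_eq_of_ge h2 hxz.le hzx.le
  have hrel := hN.map_single_anticommute_left h2 hxy hxz
  rw [hg, hk, single_mul_single_of_ne (hzx.trans h).ne', zero_add, single_mul_single hzx.le h.le,
    single_eq_zero_iff (hzx.trans h).le] at hrel
  exact mul_ne_zero hd hc hrel

lemma map_lt_of_map_lt_right (hN : NormalizedIdempotentPreserver ψ θ) (h2 : (2 : F) ≠ 0)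
    (hyx : y < x) (hzx : z < x) (h : θ y < θ x) : θ z < θ x := by
  by_contra hzx'
  have hxz := (hN.lt_or_lt h2 hzx).resolve_left hzx'
  obtain ⟨c, hc, hg⟩ := hN.exists_map_single_eq_of_le h2 hyx.le h.le
  obtain ⟨d, hd, hk⟩ := hN.exists_map_single_eq_of_ge h2 hzx.le hxz.le
  have hrel := hN.map_single_anticommute_right h2 hyx hzx
  rw [hg, hk, single_mul_single h.le hxz.le, single_mul_single_of_ne (h.trans hxz).ne', add_zero,
    single_eq_zero_iff (h.trans hxz).le] at hrel
  exact mul_ne_zero hc hd hrel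

theorem map_mul_or_map_mul_rev [Fintype X] (hN : NormalizedIdempotentPreserver ψ θ)
    (h2 : (2 : F) ≠ 0) (hconn : PosetConnected X) :
    (∀ f g, ψ (f * g) = ψ f * ψ g) ∨ (∀ f g, ψ (f * g) = ψ g * ψ f) := by
  have hdiag (x : X) : ψ (single x x 1) * ψ (single x x 1) = ψ (single x x 1) :=
    (hN.map_isIdempotentElem _ isIdempotentElem_single_self).eq
  by_cases hfwd : ∀ a b, a < b → θ a < θ b
  · have hmono {a b : X} (hab : a ≤ b) : θ a ≤ θ b :=
      hab.eq_or_lt.elim (fun h => h ▸ le_rfl) fun h => (hfwd a b h).le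
    refine Or.inl (map_mul_of_map_single hdiag (fun x y z => hN.map_single_jordan h2)
      fun x y z w hxy hzw hyz => ?_)
    obtain ⟨c, -, hc⟩ := hN.exists_map_single_eq_of_le h2 hxy (hmono hxy)
    obtain ⟨d, -, hd⟩ := hN.exists_map_single_eq_of_le h2 hzw (hmono hzw)
    rw [hc, hd, single_mul_single_of_ne (hN.injective_θ.ne hyz)]
  · push Not at hfwd
    obtain ⟨a, b, hab, hba⟩ := hfwd
    have hconst := hconn.iff_of_lt (P := fun a b => θ a < θ b)
      (fun _ _ _ h₁ h₂ => ⟨hN.map_lt_of_map_lt_left h2 h₁ h₂, hN.map_lt_of_map_lt_left h2 h₂ h₁⟩)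
      (fun _ _ _ h₁ h₂ => ⟨hN.map_lt_of_map_lt_right h2 h₁ h₂, hN.map_lt_of_map_lt_right h2 h₂ h₁⟩)
    have hanti {c d : X} (hcd : c ≤ d) : θ d ≤ θ c :=
      hcd.eq_or_lt.elim (fun h => h ▸ le_rfl) fun h =>
        ((hN.lt_or_lt h2 h).resolve_left fun h' => hba ((hconst hab h).2 h')).le
    have hop := map_mul_of_map_single (ψ := (MulOpposite.opLinearEquiv F).toLinearMap ∘ₗ ψ)
      (fun x => by simp [← MulOpposite.op_mul, hdiag])
      (fun x y z hxy hyz hxz => by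
        simp [← MulOpposite.op_mul, ← MulOpposite.op_add, add_comm,
          hN.map_single_jordan h2 hxy hyz hxz])
      (fun x y z w hxy hzw hyz => by
        obtain ⟨c, -, hc⟩ := hN.exists_map_single_eq_of_ge h2 hxy (hanti hxy)
        obtain ⟨d, -, hd⟩ := hN.exists_map_single_eq_of_ge h2 hzw (hanti hzw)
        simp [← MulOpposite.op_mul, hc, hd, single_mul_single_of_ne (hN.injective_θ.ne hyz).symm])
    exact Or.inr fun f g => by simpa using congr(MulOpposite.unop $(hop f g))

end NormalizedIdempotentPreserver
end IncidenceAlgebra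

/-- over a field of characteristic `≠ 2`, every bijective linear idempotent
preserver of the incidence algebra of a finite connected poset is an automorphism or an
anti-automorphism. -/
theorem stmt_0 {X : Type*} [PartialOrder X] [Fintype X] [LocallyFiniteOrder X] [DecidableEq X]
    {F : Type*} [Field F] (hchar : ringChar F ≠ 2)
    (hconn : PosetConnected X)
    (φ : IncidenceAlgebra F X →ₗ[F] IncidenceAlgebra F X)
    (hbij : Function.Bijective φ)
    (hidem : ∀ f : IncidenceAlgebra F X, f * f = f → φ f * φ f = φ f) :
    (∀ f g : IncidenceAlgebra F X, φ (f * g) = φ f * φ g) ∨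
      (∀ f g : IncidenceAlgebra F X, φ (f * g) = φ g * φ f) := by
  classical
  have h2 : (2 : F) ≠ 0 := Ring.two_ne_zero hchar
  have hf := OrthogonalIdempotents.map_of_isIdempotentElem φ hidem h2
    orthogonalIdempotents_single_self
  obtain ⟨θ, hθ, hone⟩ := hf.exists_injective_apply_self_eq_one fun x =>
    (map_ne_zero_iff φ hbij.1).2 ((single_eq_zero_iff le_rfl).not.2 one_ne_zero)
  obtain ⟨u, hu⟩ := hf.exists_unit_conj_single (Finite.injective_iff_bijective.1 hθ) hone
  set σ := MulSemiringAction.toAlgEquiv F (IncidenceAlgebra F X) (ConjAct.toConjAct u)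
  have hN : NormalizedIdempotentPreserver (σ.toLinearMap ∘ₗ φ) θ :=
    { map_isIdempotentElem := fun a ha => IsIdempotentElem.map (hidem a ha) σ
      injective := σ.injective.comp hbij.1
      injective_θ := hθ
      map_single_self := fun x => by simpa [σ, ConjAct.units_smul_def] using hu x }
  rcases hN.map_mul_or_map_mul_rev h2 hconn with h | h
  · exact Or.inl fun f g => by simpa using congr(σ.symm $(h f g))
  · exact Or.inr fun f g => by simpa using congr(σ.symm $(h f g))
end

section
/- Let X be a finite connected poset, F a field with char(F) = 2, and φ a Lie automorphism of I(X,F). Then the following are equivalent: (1) φ(f²) = φ(f)² for all f ∈ I(X,F); (2) φ preserves idempotents; (3) φ(e_x) is an idempotent for every x ∈ X. -/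
open IncidenceAlgebra

/-- The standard basis element `e_{xy}` of the incidence algebra (for `x ≤ y`):
the function taking value `1` at `(x, y)` and `0` elsewhere. -/
def eSingle {R : Type*} [Zero R] [One R] {X : Type*} [PartialOrder X] [DecidableEq X]
    (x y : X) (hxy : x ≤ y) : IncidenceAlgebra R X where
  toFun u v := if u = x ∧ v = y then 1 else 0
  eq_zero_of_not_le' u v huv := by
    show (if u = x ∧ v = y then (1 : R) else 0) = 0
    split_ifs with hc
    · obtain ⟨rfl, rfl⟩ := hc; exact absurd hxy huv
    · rfl

/-!
In characteristic 2, `(a + b)² = a² + b² + [a, b]`, so for a Lie map `φ` the `f` with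
`φ (f²) = φ (f)²` form a subspace, and it suffices to check the basis elements `e_{xy}`.
For `x = y` this is (3). For `x < y` we have `e_{xy}² = 0`, and `n = φ (e_{xy}) = [φ (e_x), n]`
is a commutator, hence has zero diagonal. In characteristic 2,
`[n², φ p] = n [n, φ p] + [n, φ p] n = [n, [n, φ p]] = φ [e_{xy}, [e_{xy}, p]] = 0`,
so by surjectivity `n²` is central. Commuting with every `e_z` forces `n²` to be diagonal,
and its diagonal entries are squares of those of `n`, so `n² = 0 = φ (e_{xy}²)`.
-/

theorem two_eq_zero_of_charTwo_algebra (F : Type*) {A : Type*} [CommSemiring F] [CharP F 2]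
    [Semiring A] [Algebra F A] : (2 : A) = 0 := by
  rw [← map_ofNat (algebraMap F A) 2, CharTwo.two_eq_zero, map_zero]

theorem add_mul_self_eq_of_two_eq_zero {A : Type*} [Ring A] (h2 : (2 : A) = 0) (a b : A) :
    (a + b) * (a + b) = a * a + b * b + (a * b - b * a) := by
  calc (a + b) * (a + b) = a * a + b * b + (a * b - b * a) + 2 * (b * a) := by noncomm_ring
    _ = a * a + b * b + (a * b - b * a) := by rw [h2, zero_mul, add_zero]

section CharTwoAlgebra

variable {F A B : Type*} [CommRing F] [CharP F 2] [Ring A] [Algebra F A] [Ring B] [Algebra F B]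

def squarePreservingSubmodule (φ : A →ₗ[F] B)
    (hLie : ∀ a b : A, φ (a * b - b * a) = φ a * φ b - φ b * φ a) : Submodule F A where
  carrier := {a | φ (a * a) = φ a * φ a}
  zero_mem' := by simp
  add_mem' {a b} ha hb := by
    simp only [Set.mem_ofPred_eq] at ha hb ⊢
    rw [add_mul_self_eq_of_two_eq_zero (two_eq_zero_of_charTwo_algebra F (A := A)), map_add,
      map_add, map_add, add_mul_self_eq_of_two_eq_zero (two_eq_zero_of_charTwo_algebra F (A := B)),
      hLie, ha, hb]
  smul_mem' c a ha := by
    simp only [Set.mem_ofPred_eq] at ha ⊢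
    rw [smul_mul_smul_comm, map_smul, ha, map_smul, smul_mul_smul_comm]

theorem mem_squarePreservingSubmodule {φ : A →ₗ[F] B}
    {hLie : ∀ a b : A, φ (a * b - b * a) = φ a * φ b - φ b * φ a} {a : A} :
    a ∈ squarePreservingSubmodule φ hLie ↔ φ (a * a) = φ a * φ a :=
  Iff.rfl

theorem commute_map_mul_self_of_mul_self_eq_zero {φ : A →ₗ[F] B}
    (hsurj : Function.Surjective φ)
    (hLie : ∀ a b : A, φ (a * b - b * a) = φ a * φ b - φ b * φ a)
    {e : A} (he : e * e = 0) (g : B) : Commute (φ e * φ e) g := by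
  obtain ⟨p, rfl⟩ := hsurj g
  set k := e * p - p * e
  have hA : (2 : A) = 0 := two_eq_zero_of_charTwo_algebra F
  have hB : (2 : B) = 0 := two_eq_zero_of_charTwo_algebra F
  have hek : e * k - k * e = 0 := by
    calc e * k - k * e = e * e * p + p * (e * e) - 2 * (e * p * e) := by
          simp only [k]; noncomm_ring
      _ = 0 := by rw [he, hA]; noncomm_ring
  calc φ e * φ e * φ p
      = φ p * (φ e * φ e) + (φ e * φ k - φ k * φ e) + 2 * (φ k * φ e) := by
        rw [show φ k = φ e * φ p - φ p * φ e from hLie e p]; noncomm_ring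
    _ = φ p * (φ e * φ e) := by rw [← hLie e k, hek, map_zero, hB]; noncomm_ring

end CharTwoAlgebra

section IncidenceAlgebra

variable {X R : Type*} [PartialOrder X] [LocallyFiniteOrder X] [DecidableEq X]

omit [LocallyFiniteOrder X] in
theorem eSingle_apply [Zero R] [One R] (x y : X) (hxy : x ≤ y) (u v : X) :
    eSingle (R := R) x y hxy u v = if u = x ∧ v = y then 1 else 0 := rfl

omit [DecidableEq X] in
theorem IncidenceAlgebra.mul_apply_self_s5 [NonUnitalNonAssocSemiring R]
    (f g : IncidenceAlgebra R X) (a : X) : (f * g) a a = f a a * g a a := by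
  rw [mul_apply, Finset.Icc_self, Finset.sum_singleton]

omit [DecidableEq X] in
theorem IncidenceAlgebra.commutator_apply_self [CommRing R] (f g : IncidenceAlgebra R X) (a : X) :
    (f * g - g * f) a a = 0 := by
  rw [sub_apply, mul_apply_self_s5, mul_apply_self_s5, mul_comm, sub_self]

variable [Semiring R]

theorem eSingle_mul_eSingle {x y z : X} (hxy : x ≤ y) (hyz : y ≤ z) :
    eSingle (R := R) x y hxy * eSingle y z hyz = eSingle x z (hxy.trans hyz) := by
  ext a b _
  simp only [mul_apply, eSingle_apply, ite_and, mul_ite, mul_one, mul_zero]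
  split_ifs <;> simp_all [Finset.sum_ite_eq']

theorem eSingle_mul_eSingle_of_ne {x y w z : X} (hne : y ≠ w) (hxy : x ≤ y) (hwz : w ≤ z) :
    eSingle (R := R) x y hxy * eSingle w z hwz = 0 := by
  ext a b _
  simp only [mul_apply, eSingle_apply, ite_and, mul_ite, mul_one, mul_zero]
  split_ifs <;> simp_all [Ne.symm hne]

theorem mul_eSingle_self_apply (g : IncidenceAlgebra R X) (w a b : X) :
    (g * eSingle (R := R) w w le_rfl) a b = if b = w then g a b else 0 := by
  simp only [mul_apply, eSingle_apply]
  split_ifs with hbw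
  · subst hbw
    by_cases hab : a ≤ b
    · simp [Finset.sum_ite_eq', hab]
    · simp [apply_eq_zero_of_not_le hab, Finset.Icc_eq_empty hab]
  · simp [hbw]

theorem eSingle_self_mul_apply (g : IncidenceAlgebra R X) (w a b : X) :
    (eSingle (R := R) w w le_rfl * g) a b = if a = w then g a b else 0 := by
  simp only [mul_apply, eSingle_apply]
  split_ifs with haw
  · subst haw
    by_cases hab : a ≤ b
    · simp [hab]
    · simp [apply_eq_zero_of_not_le hab, Finset.Icc_eq_empty hab]
  · simp [haw]

theorem apply_eq_zero_of_commute_eSingle {z : IncidenceAlgebra R X}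
    (hz : ∀ x, Commute z (eSingle (R := R) x x le_rfl)) {a b : X} (hab : a ≠ b) : z a b = 0 := by
  have h := congrArg (fun f : IncidenceAlgebra R X => f a b) (hz b).eq
  simpa only [mul_eSingle_self_apply, eSingle_self_mul_apply, if_pos, if_neg hab] using h

omit [LocallyFiniteOrder X] [DecidableEq X] in
theorem IncidenceAlgebra.sum_apply {ι : Type*} (s : Finset ι) (f : ι → IncidenceAlgebra R X)
    (a b : X) : (∑ i ∈ s, f i) a b = ∑ i ∈ s, f i a b := by
  induction s using Finset.cons_induction with
  | empty => rfl
  | cons i s hi ih => rw [Finset.sum_cons, Finset.sum_cons, add_apply, ih]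

omit [LocallyFiniteOrder X] in
open scoped Classical in
theorem IncidenceAlgebra.eq_sum_smul_eSingle [Fintype X] (f : IncidenceAlgebra R X) :
    f = ∑ p : {p : X × X // p.1 ≤ p.2}, f p.1.1 p.1.2 • eSingle p.1.1 p.1.2 p.2 := by
  ext a b hab
  rw [sum_apply, Finset.sum_eq_single ⟨(a, b), hab⟩]
  · rw [constSMul_apply, eSingle_apply, if_pos ⟨rfl, rfl⟩, smul_eq_mul, mul_one]
  · rintro ⟨⟨u, v⟩, huv⟩ _ hne
    rw [constSMul_apply, eSingle_apply, if_neg, smul_zero]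
    rintro ⟨rfl, rfl⟩
    exact hne rfl
  · exact fun h => absurd (Finset.mem_univ _) h

omit [LocallyFiniteOrder X] in
theorem IncidenceAlgebra.submodule_eq_top_of_eSingle_mem [Fintype X]
    (p : Submodule R (IncidenceAlgebra R X)) (hp : ∀ x y (hxy : x ≤ y), eSingle x y hxy ∈ p) :
    p = ⊤ := by
  refine eq_top_iff.2 fun f _ => ?_
  rw [eq_sum_smul_eSingle f]
  exact p.sum_mem fun q _ => p.smul_mem _ (hp _ _ _)

theorem IncidenceAlgebra.mul_self_eq_zero_of_commute {n : IncidenceAlgebra R X}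
    (hdiag : ∀ a, n a a = 0) (hcomm : ∀ x, Commute (n * n) (eSingle (R := R) x x le_rfl)) :
    n * n = 0 := by
  ext a b _
  rw [IncidenceAlgebra.zero_apply]
  rcases eq_or_ne a b with rfl | hab
  · rw [mul_apply_self_s5, hdiag, zero_mul]
  · exact apply_eq_zero_of_commute_eSingle hcomm hab

end IncidenceAlgebra

theorem map_eSingle_mul_self_eq_zero {X F : Type*} [PartialOrder X] [LocallyFiniteOrder X]
    [DecidableEq X] [CommRing F] [CharP F 2]
    {φ : IncidenceAlgebra F X →ₗ[F] IncidenceAlgebra F X} (hsurj : Function.Surjective φ)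
    (hLie : ∀ f g, φ (f * g - g * f) = φ f * φ g - φ g * φ f)
    {x y : X} (hxy : x ≤ y) (hne : x ≠ y) :
    φ (eSingle x y hxy) * φ (eSingle x y hxy) = 0 := by
  have hsq : eSingle (R := F) x y hxy * eSingle x y hxy = 0 :=
    eSingle_mul_eSingle_of_ne hne.symm hxy hxy
  have hcommutator : eSingle (R := F) x x le_rfl * eSingle x y hxy
      - eSingle x y hxy * eSingle x x le_rfl = eSingle x y hxy := by
    rw [eSingle_mul_eSingle, eSingle_mul_eSingle_of_ne hne.symm, sub_zero]
  refine mul_self_eq_zero_of_commute (fun a => ?_)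
    (fun z => commute_map_mul_self_of_mul_self_eq_zero hsurj hLie hsq _)
  rw [← hcommutator, hLie, commutator_apply_self]

theorem stmt_5_general {X : Type*} [PartialOrder X] [Fintype X] [LocallyFiniteOrder X] [DecidableEq X]
    {F : Type*} [Field F] (hchar : ringChar F = 2)
    (φ : IncidenceAlgebra F X →ₗ[F] IncidenceAlgebra F X)
    (hbij : Function.Bijective φ)
    (hLie : ∀ f g : IncidenceAlgebra F X, φ (f * g - g * f) = φ f * φ g - φ g * φ f) :
    List.TFAE
      [∀ f : IncidenceAlgebra F X, φ (f * f) = φ f * φ f,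
       ∀ f : IncidenceAlgebra F X, f * f = f → φ f * φ f = φ f,
       ∀ x : X, φ (eSingle x x le_rfl) * φ (eSingle x x le_rfl) = φ (eSingle x x le_rfl)] := by
  have : CharP F 2 := ringChar.of_eq hchar
  tfae_have 1 → 2 := fun h f hf => by rw [← h, hf]
  tfae_have 2 → 3 := fun h x => h _ (eSingle_mul_eSingle le_rfl le_rfl)
  tfae_have 3 → 1 := by
    intro h f
    suffices squarePreservingSubmodule φ hLie = ⊤ from
      mem_squarePreservingSubmodule.1 (this ▸ Submodule.mem_top)
    refine submodule_eq_top_of_eSingle_mem _ fun x y hxy => mem_squarePreservingSubmodule.2 ?_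
    rcases eq_or_ne x y with rfl | hne
    · rw [eSingle_mul_eSingle, h]
    · rw [eSingle_mul_eSingle_of_ne hne.symm, map_zero,
        map_eSingle_mul_self_eq_zero hbij.2 hLie hxy hne]
  tfae_finish

/-- for a Lie automorphism of the incidence algebra of a finite connected poset
over a field of characteristic 2, the following are equivalent: it preserves squares; it
preserves idempotents; it sends each `e_x` to an idempotent. -/
theorem stmt_5 {X : Type*} [PartialOrder X] [Fintype X] [LocallyFiniteOrder X] [DecidableEq X]
    {F : Type*} [Field F] (hchar : ringChar F = 2)
    (hconn : PosetConnected X)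
    (φ : IncidenceAlgebra F X →ₗ[F] IncidenceAlgebra F X)
    (hbij : Function.Bijective φ)
    (hLie : ∀ f g : IncidenceAlgebra F X, φ (f * g - g * f) = φ f * φ g - φ g * φ f) :
    List.TFAE
      [∀ f : IncidenceAlgebra F X, φ (f * f) = φ f * φ f,
       ∀ f : IncidenceAlgebra F X, f * f = f → φ f * φ f = φ f,
       ∀ x : X, φ (eSingle x x le_rfl) * φ (eSingle x x le_rfl) = φ (eSingle x x le_rfl)] :=
  stmt_5_general hchar φ hbij hLie
end

section
/- Let X be a finite connected poset, F a field, and φ a Jordan automorphism of I(X,F), i.e. a bijective F-linear map with φ(f²) = φ(f)² and φ(fgf) = φ(f)φ(g)φ(f) for all f, g. Then there exist an invertible element β ∈ I(X,F) and a bijection λ: X → X such that φ(e_x) = β e_{λ(x)} β⁻¹ for all x ∈ X. -/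
/-!
The images `a_x := φ(e_x)` form a complete family of orthogonal idempotents: `φ(1) = 1` by
surjectivity, and for orthogonal idempotents the Jordan identities force `φ(e)φ(f) = 0`.
Taking diagonals is a ring map `I(X,F) → F^X` with nil kernel, so no `a_x` has zero diagonal,
and in `F^X` a complete family of `|X|` nonzero orthogonal idempotents consists of the
indicator functions of points: the diagonal of `a_x` is that of `e_{λ(x)}` for a permutation
`λ`. Then `β := ∑ a_x e_{λ(x)}` satisfies `a_x β = β e_{λ(x)}` and has unit diagonal, hence
is invertible.
-/

open IncidenceAlgebra

open Finset

structure IsJordanHom {R S G : Type*} [Mul R] [Mul S] [FunLike G R S] (φ : G) : Prop where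
  map_mul_self : ∀ f, φ (f * f) = φ f * φ f
  map_mul_mul_self : ∀ f g, φ (f * g * f) = φ f * φ g * φ f

namespace IsJordanHom

theorem map_one {R S G : Type*} [Monoid R] [Monoid S] [FunLike G R S] {φ : G}
    (hφ : IsJordanHom φ) (hsurj : Function.Surjective φ) : φ 1 = 1 := by
  have hsandwich (g : R) : φ 1 * φ g * φ 1 = φ g := by
    simpa using (hφ.map_mul_mul_self 1 g).symm
  obtain ⟨u, hu⟩ := hsurj 1
  calc φ 1 = φ 1 * 1 * φ 1 := by rw [mul_one, ← hφ.map_mul_self, one_mul]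
    _ = 1 := by rw [← hu, hsandwich]

variable {R S G : Type*} [Ring R] [Ring S] [FunLike G R S] [AddMonoidHomClass G R S] {φ : G}

theorem map_mul_add_mul_swap (hφ : IsJordanHom φ) (f g : R) :
    φ (f * g + g * f) = φ f * φ g + φ g * φ f := by
  have h := hφ.map_mul_self (f + g)
  rw [add_mul, mul_add, mul_add, map_add, map_add, map_add, map_add, hφ.map_mul_self,
    hφ.map_mul_self] at h
  apply add_left_cancel (a := φ f * φ f)
  apply add_right_cancel (b := φ g * φ g)
  convert h using 1
  · rw [map_add]; abel
  · noncomm_ring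

-- No division by `2` is needed, so this holds in every characteristic.
theorem map_mul_map_eq_zero {e f : R} (hφ : IsJordanHom φ) (he : IsIdempotentElem e)
    (hef : e * f = 0) (hfe : f * e = 0) : φ e * φ f = 0 := by
  have hanti : φ e * φ f + φ f * φ e = 0 := by
    rw [← hφ.map_mul_add_mul_swap, hef, hfe, add_zero, map_zero]
  have hsandwich : φ e * φ f * φ e = 0 := by
    rw [← hφ.map_mul_mul_self, hef, zero_mul, map_zero]
  calc φ e * φ f = φ e * (φ e * φ f) := by rw [← mul_assoc, ← hφ.map_mul_self, he.eq]
    _ = φ e * -(φ f * φ e) := by rw [eq_neg_of_add_eq_zero_left hanti]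
    _ = 0 := by rw [mul_neg, ← mul_assoc, hsandwich, neg_zero]

theorem completeOrthogonalIdempotents_comp {ι : Type*} [Fintype ι] {e : ι → R}
    (hφ : IsJordanHom φ) (hsurj : Function.Surjective φ) (he : CompleteOrthogonalIdempotents e) :
    CompleteOrthogonalIdempotents (φ ∘ e) where
  idem i := by
    simp only [IsIdempotentElem, Function.comp_apply, ← hφ.map_mul_self, (he.idem i).eq]
  ortho i j hij :=
    hφ.map_mul_map_eq_zero (he.idem i) (he.ortho hij) (he.ortho hij.symm)
  complete := by rw [← hφ.map_one hsurj, ← he.complete, map_sum]; rfl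

end IsJordanHom

theorem OrthogonalIdempotents.mul_sum_mul_eq {R ι : Type*} [Semiring R] [Fintype ι]
    {a b : ι → R} (ha : OrthogonalIdempotents a) (hb : OrthogonalIdempotents b) (i : ι) :
    a i * ∑ j, a j * b j = (∑ j, a j * b j) * b i := by
  have hleft : a i * ∑ j, a j * b j = a i * b i := by
    rw [mul_sum, sum_eq_single i
      (fun j _ hji ↦ by rw [← mul_assoc, ha.ortho hji.symm, zero_mul])
      (by simp), ← mul_assoc, (ha.idem i).eq]
  have hright : (∑ j, a j * b j) * b i = a i * b i := by
    rw [sum_mul, sum_eq_single i (fun j _ hji ↦ by rw [mul_assoc, hb.ortho hji, mul_zero])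
      (by simp), mul_assoc, (hb.idem i).eq]
  rw [hleft, hright]

theorem CompleteOrthogonalIdempotents.exists_eq_single {R ι : Type*} [Semiring R] [IsDomain R]
    [Fintype ι] [DecidableEq ι] {e : ι → R} (he : CompleteOrthogonalIdempotents e) :
    ∃ i, e = Pi.single i 1 := by
  obtain ⟨i, -, hi⟩ : ∃ i ∈ univ, e i ≠ 0 :=
    exists_ne_zero_of_sum_ne_zero (by simp [he.complete])
  have hi1 : e i = 1 := (IsIdempotentElem.iff_eq_zero_or_one.1 (he.idem i)).resolve_left hi
  refine ⟨i, funext fun j ↦ ?_⟩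
  rcases eq_or_ne j i with rfl | hji
  · simp [hi1]
  · simpa [hji, hi1] using he.ortho hji

theorem CompleteOrthogonalIdempotents.exists_equiv_eq_single {R X : Type*} [Semiring R]
    [IsDomain R] [Fintype X] [DecidableEq X] {p : X → X → R}
    (hp : CompleteOrthogonalIdempotents p) (hne : ∀ x, p x ≠ 0) :
    ∃ l : X ≃ X, ∀ x, p x = Pi.single (l x) 1 := by
  choose μ hμ using fun t ↦ (hp.map (Pi.evalRingHom (fun _ ↦ R) t)).exists_eq_single
  have hpμ (x t : X) : p x t = if x = μ t then 1 else 0 := by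
    simpa [Pi.single_apply] using congrFun (hμ t) x
  have hsurj : Function.Surjective μ := fun x ↦ by
    obtain ⟨t, ht⟩ := Function.ne_iff.1 (hne x)
    exact ⟨t, by_contra fun h ↦ by simp [hpμ, Ne.symm h] at ht⟩
  let E := Equiv.ofBijective μ ⟨Finite.injective_iff_surjective.2 hsurj, hsurj⟩
  refine ⟨E.symm, fun x ↦ ?_⟩
  obtain ⟨s, rfl⟩ := E.surjective x
  ext t
  rw [E.symm_apply_apply, hpμ, Pi.single_apply]
  exact if_congr (E.injective.eq_iff.trans eq_comm) rfl rfl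

namespace IncidenceAlgebra

variable {R X : Type*}

theorem sum_apply_s6 [AddCommMonoid R] [LE X] {ι : Type*} (s : Finset ι)
    (f : ι → IncidenceAlgebra R X) (u v : X) : (∑ i ∈ s, f i) u v = ∑ i ∈ s, f i u v :=
  map_sum (⟨⟨fun f ↦ f u v, rfl⟩, fun _ _ ↦ rfl⟩ : IncidenceAlgebra R X →+ R) f s

section Single

variable [PartialOrder X] [DecidableEq X]

theorem eSingle_apply [Zero R] [One R] (x y : X) (hxy : x ≤ y) (u v : X) :
    (eSingle x y hxy : IncidenceAlgebra R X) u v = if u = x ∧ v = y then 1 else 0 := rfl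

theorem sum_eSingle [Semiring R] [Fintype X] :
    ∑ x : X, (eSingle x x le_rfl : IncidenceAlgebra R X) = 1 := by
  ext u v _
  rcases eq_or_ne u v with rfl | huv
  · simp [sum_apply_s6, eSingle_apply]
  · have hno (x : X) : ¬(u = x ∧ v = x) := fun h ↦ huv (h.1.trans h.2.symm)
    simp [sum_apply_s6, eSingle_apply, hno, huv]

theorem eSingle_mul_eSingle [Semiring R] [LocallyFiniteOrder X] (x y : X) :
    (eSingle x x le_rfl : IncidenceAlgebra R X) * eSingle y y le_rfl =
      if x = y then eSingle x x le_rfl else 0 := by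
  ext u v _
  rw [mul_apply]
  split_ifs with hxy
  · subst hxy
    rw [eSingle_apply]
    split_ifs with h
    · obtain ⟨rfl, rfl⟩ := h
      simp [eSingle_apply]
    · refine sum_eq_zero fun z _ ↦ ?_
      simp only [eSingle_apply]
      split_ifs <;> simp_all
  · refine sum_eq_zero fun z _ ↦ ?_
    simp only [eSingle_apply]
    split_ifs <;> simp_all

theorem completeOrthogonalIdempotents_eSingle [Semiring R] [LocallyFiniteOrder X] [Fintype X] :
    CompleteOrthogonalIdempotents fun x : X ↦ (eSingle x x le_rfl : IncidenceAlgebra R X) where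
  idem x := by simp [IsIdempotentElem, eSingle_mul_eSingle]
  ortho x y hxy := by simp [eSingle_mul_eSingle, hxy]
  complete := sum_eSingle

end Single

variable [PartialOrder X] [LocallyFiniteOrder X] [DecidableEq X]

variable (R X) in
def diag [Semiring R] : IncidenceAlgebra R X →+* (X → R) where
  toFun f t := f t t
  map_one' := by ext; simp
  map_mul' f g := by ext; simp
  map_zero' := rfl
  map_add' _ _ := rfl

@[simp]
theorem diag_apply [Semiring R] (f : IncidenceAlgebra R X) (t : X) : diag R X f t = f t t := rfl

theorem diag_eSingle [Semiring R] (x : X) :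
    diag R X (eSingle x x le_rfl) = Pi.single x 1 := by
  ext t
  simp [eSingle_apply, Pi.single_apply]

theorem pow_apply_eq_zero_of_card_Icc_le_s6 [Semiring R] {f : IncidenceAlgebra R X}
    (hf : diag R X f = 0) (k : ℕ) (x y : X) (hk : #(Icc x y) ≤ k) : (f ^ k) x y = 0 := by
  induction k generalizing x with
  | zero =>
    have hxy : ¬x ≤ y := by simpa using hk
    simp [ne_of_not_le hxy]
  | succ k ih =>
    rw [pow_succ', mul_apply]
    refine sum_eq_zero fun z hz ↦ ?_
    obtain ⟨hxz, hzy⟩ := mem_Icc.1 hz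
    rcases hxz.eq_or_lt with rfl | hxz
    · simp [← diag_apply, hf]
    · have hsub : Icc z y ⊂ Icc x y :=
        ssubset_iff_of_subset (Icc_subset_Icc_left hxz.le) |>.2
          ⟨x, mem_Icc.2 ⟨le_rfl, hxz.le.trans hzy⟩, fun h ↦ hxz.not_ge (mem_Icc.1 h).1⟩
      rw [ih z (by have := card_lt_card hsub; omega), mul_zero]

theorem isNilpotent_of_diag_eq_zero [Semiring R] [Fintype X] {f : IncidenceAlgebra R X}
    (hf : diag R X f = 0) : IsNilpotent f :=
  ⟨Fintype.card X, ext fun x y _ ↦ pow_apply_eq_zero_of_card_Icc_le_s6 hf _ x y (card_le_univ _)⟩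

theorem isUnit_of_diag_eq_one [Ring R] [Fintype X] {f : IncidenceAlgebra R X}
    (hf : diag R X f = 1) : IsUnit f := by
  have hnil : IsNilpotent (f - 1) := isNilpotent_of_diag_eq_zero (by simp [hf])
  simpa using hnil.isUnit_one_add

theorem isUnit_sum_mul_of_diag_eq [Ring R] [Fintype X] {ι : Type*} [Fintype ι]
    {a b : ι → IncidenceAlgebra R X} (hb : CompleteOrthogonalIdempotents b)
    (hab : ∀ i, diag R X (a i) = diag R X (b i)) : IsUnit (∑ i, a i * b i) := by
  refine isUnit_of_diag_eq_one ?_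
  calc diag R X (∑ i, a i * b i) = diag R X (∑ i, b i * b i) := by
        simp only [map_sum, map_mul, hab]
    _ = 1 := by simp only [(hb.idem _).eq, hb.complete, map_one]

end IncidenceAlgebra

theorem stmt_6_general {X : Type*} [PartialOrder X] [Fintype X] [LocallyFiniteOrder X] [DecidableEq X]
    {F : Type*} [Field F]
    (φ : IncidenceAlgebra F X →ₗ[F] IncidenceAlgebra F X)
    (hbij : Function.Bijective φ)
    (hsq : ∀ f : IncidenceAlgebra F X, φ (f * f) = φ f * φ f)
    (htriple : ∀ f g : IncidenceAlgebra F X, φ (f * g * f) = φ f * φ g * φ f) :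
    ∃ (β : (IncidenceAlgebra F X)ˣ) (l : X ≃ X),
      ∀ x : X, φ (eSingle x x le_rfl) =
        (β : IncidenceAlgebra F X) * eSingle (l x) (l x) le_rfl * ((β⁻¹ : _) : IncidenceAlgebra F X) := by
  let e (x : X) : IncidenceAlgebra F X := eSingle x x le_rfl
  have he : CompleteOrthogonalIdempotents e := completeOrthogonalIdempotents_eSingle
  have ha : CompleteOrthogonalIdempotents (φ ∘ e) :=
    IsJordanHom.completeOrthogonalIdempotents_comp ⟨hsq, htriple⟩ hbij.2 he
  have hdiag_ne (x : X) : diag F X (φ (e x)) ≠ 0 := fun h ↦ by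
    have hφe : φ (e x) = 0 := (ha.idem x).eq_zero_of_isNilpotent (isNilpotent_of_diag_eq_zero h)
    have hex : diag F X (e x) = 0 := by rw [hbij.1 (hφe.trans (map_zero φ).symm), map_zero]
    simp [e, diag_eSingle] at hex
  obtain ⟨l, hl⟩ := (ha.map (diag F X)).exists_equiv_eq_single hdiag_ne
  have hb : CompleteOrthogonalIdempotents (e ∘ l) := (CompleteOrthogonalIdempotents.equiv l).2 he
  obtain ⟨β, hβ⟩ := isUnit_sum_mul_of_diag_eq hb fun x ↦ (hl x).trans (diag_eSingle _).symm
  refine ⟨β, l, fun x ↦ (Units.eq_mul_inv_iff_mul_eq β).2 ?_⟩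
  rw [hβ]
  exact ha.toOrthogonalIdempotents.mul_sum_mul_eq hb.toOrthogonalIdempotents x

/-- for a Jordan automorphism `φ` of the incidence algebra of a finite connected
poset over a field, there are an invertible element `β` and a bijection `λ` of `X` with
`φ(e_x) = β e_{λ(x)} β⁻¹` for all `x`. -/
theorem stmt_6 {X : Type*} [PartialOrder X] [Fintype X] [LocallyFiniteOrder X] [DecidableEq X]
    {F : Type*} [Field F]
    (hconn : PosetConnected X)
    (φ : IncidenceAlgebra F X →ₗ[F] IncidenceAlgebra F X)
    (hbij : Function.Bijective φ)
    (hsq : ∀ f : IncidenceAlgebra F X, φ (f * f) = φ f * φ f)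
    (htriple : ∀ f g : IncidenceAlgebra F X, φ (f * g * f) = φ f * φ g * φ f) :
    ∃ (β : (IncidenceAlgebra F X)ˣ) (l : X ≃ X),
      ∀ x : X, φ (eSingle x x le_rfl) =
        (β : IncidenceAlgebra F X) * eSingle (l x) (l x) le_rfl * ((β⁻¹ : _) : IncidenceAlgebra F X) :=
  stmt_6_general φ hbij hsq htriple
end

section
/- Let X be a locally finite poset, R a commutative unital ring, and α₁, …, α_n a finite family of pairwise commuting idempotents of I(X,R). Then there exists an invertible element β ∈ I(X,R) such that α_i = β (α_i)_D β⁻¹ for all 1 ≤ i ≤ n, where (α_i)_D denotes the diagonal of α_i. -/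
open IncidenceAlgebra

/-- The diagonal part `f_D` of an element of the incidence algebra. -/
def diagPart {R : Type*} [Zero R] {X : Type*} [PartialOrder X] [DecidableEq X]
    (f : IncidenceAlgebra R X) : IncidenceAlgebra R X where
  toFun u v := if u = v then f u v else 0
  eq_zero_of_not_le' u v huv := by
    show (if u = v then f u v else 0) = 0
    exact if_neg fun h => huv (le_of_eq h)

/-!
If `γ` is an idempotent with diagonal `d`, then `u = γ d + (1 - γ)(1 - d)` satisfies `γ u = u d`,
and the diagonal of `u` is `d² + (1 - d)² = 1`. An element of `I(X, R)` with diagonal `1` is a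
unit: it has a left inverse, built by recursion on intervals, which again has diagonal `1` and so
has a left inverse itself. Having conjugated `α₁, …, αₙ₋₁` to their diagonals by `β`, apply this
to `γ = β⁻¹ αₙ β`; as `u` is a polynomial in `γ` and `d`, it commutes with every diagonal that `γ`
commutes with, in particular with the diagonals of the earlier `αᵢ`.
-/

open Finset

section Conjugator

theorem Units.inv_conj_mul {M : Type*} [Monoid M] (u : Mˣ) (a b : M) :
    (↑u⁻¹ * a * u) * (↑u⁻¹ * b * u) = ↑u⁻¹ * (a * b) * u := by
  simp only [mul_assoc, Units.mul_inv_cancel_left]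

variable {A : Type*} [Ring A] {e f : A}

theorem IsIdempotentElem.mul_self_add_one_sub_mul_self (hf : IsIdempotentElem f) :
    f * f + (1 - f) * (1 - f) = 1 := by
  rw [hf.one_sub.eq, hf.eq, add_sub_cancel]

theorem IsIdempotentElem.mul_conjugator (he : IsIdempotentElem e) (hf : IsIdempotentElem f) :
    e * (e * f + (1 - e) * (1 - f)) = (e * f + (1 - e) * (1 - f)) * f := by
  rw [mul_add, ← mul_assoc, ← mul_assoc, he.eq, he.mul_one_sub_self, zero_mul, add_mul,
    mul_assoc, mul_assoc, hf.eq, hf.one_sub_mul_self, mul_zero]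

theorem Commute.conjugator {c : A} (he : Commute e c) (hf : Commute f c) :
    Commute (e * f + (1 - e) * (1 - f)) c :=
  (he.mul_left hf).add_left
    (((Commute.one_left c).sub_left he).mul_left ((Commute.one_left c).sub_left hf))

end Conjugator

namespace IncidenceAlgebra

variable {R X : Type*} [PartialOrder X] [DecidableEq X]

@[simp] theorem diagPart_apply [Zero R] (f : IncidenceAlgebra R X) (a b : X) :
    diagPart f a b = if a = b then f a b else 0 := rfl

theorem diagPart_diagPart [Zero R] (f : IncidenceAlgebra R X) :
    diagPart (diagPart f) = diagPart f := by
  ext a b _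
  by_cases h : a = b <;> simp [h]

theorem diagPart_one [Zero R] [One R] : diagPart (1 : IncidenceAlgebra R X) = 1 := by
  ext a b _
  by_cases h : a = b <;> simp [h]

section Semiring

variable [Semiring R] [LocallyFiniteOrder X]

theorem diagPart_mul (f g : IncidenceAlgebra R X) :
    diagPart (f * g) = diagPart f * diagPart g := by
  ext a b _
  by_cases h : a = b
  · subst h
    simp
  · rw [diagPart_apply, if_neg h, mul_apply, eq_comm]
    refine sum_eq_zero fun x _ => ?_
    by_cases hax : a = x
    · subst hax
      simp [h]
    · simp [hax]

def diagPartHom : IncidenceAlgebra R X →+* IncidenceAlgebra R X where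
  toFun := diagPart
  map_one' := diagPart_one
  map_mul' := diagPart_mul
  map_zero' := by ext; simp
  map_add' f g := by
    ext a b _
    by_cases h : a = b <;> simp [h, add_apply]

@[simp] theorem diagPartHom_apply (f : IncidenceAlgebra R X) : diagPartHom f = diagPart f := rfl

end Semiring

theorem diagPart_mul_comm [CommSemiring R] [LocallyFiniteOrder X] (f g : IncidenceAlgebra R X) :
    diagPart (f * g) = diagPart (g * f) := by
  ext a b _
  by_cases h : a = b
  · subst h
    simp [mul_comm]
  · simp [h]

theorem commute_diagPart [CommSemiring R] [LocallyFiniteOrder X] (f g : IncidenceAlgebra R X) :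
    Commute (diagPart f) (diagPart g) := by
  rw [Commute, SemiconjBy, ← diagPart_mul, ← diagPart_mul, diagPart_mul_comm]

section Ring

variable [Ring R] [LocallyFiniteOrder X]

private def leftInvFun (f : IncidenceAlgebra R X) (a : X) : X → R
  | b =>
    if a = b then 1
    else
      -∑ x ∈ (Ico a b).attach,
          let h := mem_Ico.1 x.2
          have : #(Icc a x) < #(Icc a b) :=
            card_lt_card (Icc_ssubset_Icc_right (h.1.trans h.2.le) le_rfl h.2)
          leftInvFun f a x * f x b
termination_by b => #(Icc a b)

private lemma leftInvFun_apply (f : IncidenceAlgebra R X) (a b : X) :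
    leftInvFun f a b =
      if a = b then 1 else -∑ x ∈ (Ico a b).attach, leftInvFun f a x * f x b := by
  rw [leftInvFun]

private def leftInv (f : IncidenceAlgebra R X) : IncidenceAlgebra R X :=
  ⟨leftInvFun f, fun a b => not_imp_comm.1 fun h => by
    rw [leftInvFun_apply] at h
    split_ifs at h with hab
    · exact hab.le
    · obtain ⟨⟨x, hx⟩, -⟩ := exists_ne_zero_of_sum_ne_zero (neg_ne_zero.1 h)
      exact (nonempty_Ico.1 ⟨x, hx⟩).le⟩

private lemma leftInv_apply (f : IncidenceAlgebra R X) (a b : X) :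
    leftInv f a b = if a = b then 1 else -∑ x ∈ Ico a b, leftInv f a x * f x b := by
  rw [leftInv, coe_mk, leftInvFun_apply, ← sum_attach (Ico a b)]

private lemma leftInv_mul {f : IncidenceAlgebra R X} (hf : diagPart f = 1) :
    leftInv f * f = 1 := by
  have hff (x : X) : f x x = 1 := by simpa using congrArg (fun g => g x x) hf
  ext a b hab
  rw [mul_apply, one_apply]
  by_cases h : a = b
  · subst h
    rw [Icc_self, sum_singleton, leftInv_apply, if_pos rfl, if_pos rfl, hff, one_mul]
  · rw [if_neg h, Icc_eq_cons_Ico hab, sum_cons, hff, mul_one, leftInv_apply, if_neg h,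
      neg_add_cancel]

theorem isUnit_of_diagPart_eq_one {f : IncidenceAlgebra R X} (hf : diagPart f = 1) :
    IsUnit f := by
  have hgf := leftInv_mul hf
  have hg : diagPart (leftInv f) = 1 := by
    simpa only [diagPart_mul, hf, mul_one, diagPart_one] using congrArg diagPart hgf
  have hhg := leftInv_mul hg
  rw [left_inv_eq_right_inv hhg hgf] at hhg
  exact ⟨⟨f, leftInv f, hhg, hgf⟩, rfl⟩

end Ring

variable [CommRing R] [LocallyFiniteOrder X]

theorem IsIdempotentElem.exists_units_mul_eq_mul_diagPart {γ : IncidenceAlgebra R X}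
    (hγ : IsIdempotentElem γ) :
    ∃ u : (IncidenceAlgebra R X)ˣ, γ * u = u * diagPart γ ∧
      ∀ c, Commute γ (diagPart c) → Commute (u : IncidenceAlgebra R X) (diagPart c) := by
  set d := diagPart γ
  have hd : IsIdempotentElem d := hγ.map diagPartHom
  have hdiag : diagPartHom (γ * d + (1 - γ) * (1 - d)) = 1 := by
    rw [map_add, map_mul, map_mul, map_sub, map_sub, map_one, diagPartHom_apply,
      diagPartHom_apply, diagPart_diagPart]
    exact hd.mul_self_add_one_sub_mul_self
  obtain ⟨u, hu⟩ := isUnit_of_diagPart_eq_one hdiag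
  exact ⟨u, hu ▸ hγ.mul_conjugator hd, fun c hc => hu ▸ hc.conjugator (commute_diagPart γ c)⟩

theorem exists_units_forall_mul_eq_mul_diagPart (n : ℕ) (α : Fin n → IncidenceAlgebra R X)
    (hidem : ∀ i, IsIdempotentElem (α i)) (hcomm : ∀ i j, Commute (α i) (α j)) :
    ∃ β : (IncidenceAlgebra R X)ˣ, ∀ i, α i * β = β * diagPart (α i) := by
  induction n with
  | zero => exact ⟨1, finZeroElim⟩
  | succ n ih =>
    obtain ⟨β, hβ⟩ := ih (fun i => α i.castSucc) (fun i => hidem _) (fun i j => hcomm _ _)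
    set γ := ↑β⁻¹ * α (Fin.last n) * β
    have hβγ : α (Fin.last n) * β = β * γ := by
      simp only [γ, mul_assoc, Units.mul_inv_cancel_left]
    have hD (i : Fin n) : diagPart (α i.castSucc) = ↑β⁻¹ * α i.castSucc * β := by
      rw [mul_assoc, hβ i, Units.inv_mul_cancel_left]
    have hγ : IsIdempotentElem γ := by
      rw [IsIdempotentElem, Units.inv_conj_mul, (hidem _).eq]
    have hγD (i : Fin n) : Commute γ (diagPart (α i.castSucc)) := by
      rw [hD, Commute, SemiconjBy, Units.inv_conj_mul, Units.inv_conj_mul, (hcomm _ _).eq]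
    have hdγ : diagPart γ = diagPart (α (Fin.last n)) := by
      rw [diagPart_mul, diagPart_mul, (commute_diagPart _ _).eq, mul_assoc, ← diagPart_mul,
        Units.inv_mul, diagPart_one, mul_one]
    obtain ⟨u, hγu, hu⟩ := hγ.exists_units_mul_eq_mul_diagPart
    refine ⟨β * u, Fin.lastCases ?_ fun i => ?_⟩
    · rw [Units.val_mul, ← mul_assoc, hβγ, mul_assoc, hγu, ← mul_assoc, hdγ]
    · rw [Units.val_mul, ← mul_assoc, hβ i, mul_assoc, ← (hu _ (hγD i)).eq, mul_assoc]

end IncidenceAlgebra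

/-- a finite family of pairwise commuting idempotents of an incidence algebra is
simultaneously conjugate to its diagonals. -/
theorem stmt_9 {X : Type*} [PartialOrder X] [LocallyFiniteOrder X] [DecidableEq X]
    {R : Type*} [CommRing R]
    (n : ℕ) (α : Fin n → IncidenceAlgebra R X)
    (hidem : ∀ i, α i * α i = α i)
    (hcomm : ∀ i j, α i * α j = α j * α i) :
    ∃ β : (IncidenceAlgebra R X)ˣ,
      ∀ i, α i = (β : IncidenceAlgebra R X) * diagPart (α i) * ((β⁻¹ : _) : IncidenceAlgebra R X) := by
  obtain ⟨β, hβ⟩ := exists_units_forall_mul_eq_mul_diagPart n α hidem hcomm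
  exact ⟨β, fun i => (Units.eq_mul_inv_iff_mul_eq β).2 (hβ i)⟩
end

section
/- Let X be a finite poset, R a commutative unital ring, and x < y in X. For A ⊆ X let e_A ∈ I(X,R) be the diagonal idempotent with e_A(u,u)=1 for u ∈ A and all other values 0, and let C(e_A) = {f ∈ I(X,R) : f e_A = e_A f}. Then the intersection of C(e_A) over all subsets A ⊆ X containing both x and y equals D(X,R) ⊕ ⟨e_{xy}⟩; equivalently, f lies in this intersection if and only if f = f_D + f(x,y) e_{xy}. -/
/-!
Right (left) multiplication by `e_A` keeps exactly the columns (rows) indexed by `A`, so `f`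
commutes with `e_A` iff `f u v = 0` whenever exactly one of `u`, `v` lies in `A`. An off-diagonal
entry `(u, v) ≠ (x, y)` is separated in this way by `A = {x, y, u}` or `A = {x, y, v}`, unless
`(u, v) = (y, x)`, and that entry vanishes because `y ≰ x`.
-/

open IncidenceAlgebra

/-- The diagonal idempotent `e_A` associated to a subset `A ⊆ X`:
`e_A (x, x) = 1` for `x ∈ A` and all other values are `0`. -/
noncomputable def eSet {R : Type*} [Zero R] [One R] {X : Type*} [PartialOrder X]
    (A : Set X) : IncidenceAlgebra R X where
  toFun u v :=
    letI := Classical.propDecidable (u = v ∧ u ∈ A)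
    if u = v ∧ u ∈ A then 1 else 0
  eq_zero_of_not_le' u v huv := by
    try dsimp only
    rw [if_neg]
    rintro ⟨rfl, -⟩
    exact huv le_rfl

namespace IncidenceAlgebra

variable {X : Type*} [PartialOrder X] {R : Type*} [Semiring R]

lemma eSet_apply_of_ne (A : Set X) {u v : X} (h : u ≠ v) :
    (eSet A : IncidenceAlgebra R X) u v = 0 :=
  if_neg fun h' => h h'.1

lemma eSet_apply_self (A : Set X) (u : X) :
    (eSet A : IncidenceAlgebra R X) u u = A.indicator 1 u := by
  classical
  by_cases hu : u ∈ A <;> simp [eSet, hu]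

lemma eq_diagPart_add_smul_eSingle_iff [DecidableEq X] {x y : X} (hxy : x < y)
    (f : IncidenceAlgebra R X) :
    f = diagPart f + f x y • eSingle x y hxy.le ↔
      ∀ u v, u ≠ v → ¬(u = x ∧ v = y) → f u v = 0 := by
  constructor
  · intro h u v hne hne'
    simpa [diagPart, eSingle, hne, hne'] using congr($h u v)
  · intro h
    ext u v -
    simp only [add_apply, constSMul_apply, diagPart, eSingle, coe_mk, smul_eq_mul]
    by_cases huv : u = v
    · subst huv
      have hxy' : ¬(u = x ∧ u = y) := fun h => hxy.ne (h.1.symm.trans h.2)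
      simp [hxy']
    · by_cases hxy' : u = x ∧ v = y
      · obtain ⟨rfl, rfl⟩ := hxy'
        simp [huv]
      · simp [huv, hxy', h u v huv hxy']

variable [LocallyFiniteOrder X]

lemma mul_eSet_apply (f : IncidenceAlgebra R X) (A : Set X) (u v : X) :
    (f * eSet A : IncidenceAlgebra R X) u v = A.indicator (f u) v := by
  by_cases huv : u ≤ v
  · rw [mul_apply, Finset.sum_eq_single_of_mem v (Finset.right_mem_Icc.2 huv)
      fun z _ hz => by rw [eSet_apply_of_ne A hz, mul_zero],
      eSet_apply_self, ← Set.indicator_mul_right]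
    simp only [Pi.one_apply, mul_one]
  · rw [apply_eq_zero_of_not_le huv, eq_comm, Set.indicator_apply_eq_zero]
    exact fun _ => f.apply_eq_zero_of_not_le huv

lemma eSet_mul_apply (f : IncidenceAlgebra R X) (A : Set X) (u v : X) :
    (eSet A * f : IncidenceAlgebra R X) u v = A.indicator (f · v) u := by
  by_cases huv : u ≤ v
  · rw [mul_apply, Finset.sum_eq_single_of_mem u (Finset.left_mem_Icc.2 huv)
      fun z _ hz => by rw [eSet_apply_of_ne A (Ne.symm hz), zero_mul],
      eSet_apply_self, ← Set.indicator_mul_left A 1 (f · v)]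
    simp only [Pi.one_apply, one_mul]
  · rw [apply_eq_zero_of_not_le huv, eq_comm, Set.indicator_apply_eq_zero]
    exact fun _ => f.apply_eq_zero_of_not_le huv

lemma mul_eSet_eq_eSet_mul_iff (f : IncidenceAlgebra R X) (A : Set X) :
    f * eSet A = eSet A * f ↔ ∀ u v, (u ∈ A ↔ v ∉ A) → f u v = 0 := by
  constructor
  · intro h u v huv
    have huv' := congr($h u v)
    rw [mul_eSet_apply, eSet_mul_apply] at huv'
    by_cases hu : u ∈ A
    · simpa [hu, huv.1 hu] using huv'.symm
    · simpa [hu, not_not.1 (mt huv.2 hu)] using huv'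
  · intro h
    classical
    ext u v -
    rw [mul_eSet_apply, eSet_mul_apply, Set.indicator_apply, Set.indicator_apply]
    split_ifs <;> first | rfl | simp [h u v (by tauto)]

end IncidenceAlgebra

theorem stmt_11_general {X : Type*} [PartialOrder X] [LocallyFiniteOrder X] [DecidableEq X]
    {R : Type*} [CommRing R]
    {x y : X} (hxy : x < y) (f : IncidenceAlgebra R X) :
    (∀ A : Set X, x ∈ A → y ∈ A → f * eSet A = eSet A * f) ↔
      f = diagPart f + f x y • eSingle x y hxy.le := by
  rw [eq_diagPart_add_smul_eSingle_iff hxy]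
  simp only [mul_eSet_eq_eSet_mul_iff]
  constructor
  · intro h u v hne hne'
    by_cases hu : u = x ∨ u = y
    · by_cases hv : v = x ∨ v = y
      · obtain ⟨rfl, rfl⟩ : u = y ∧ v = x := by grind
        exact f.apply_eq_zero_of_not_le hxy.not_ge
      · exact h {x, y, u} (by simp) (by simp) u v (by simp [hv, hne.symm])
    · exact h {x, y, v} (by simp) (by simp) u v (by simp [hu, hne])
  · intro h A hx hy u v huv
    refine h u v (fun huv' => iff_not_self (huv' ▸ huv)) ?_
    rintro ⟨rfl, rfl⟩
    exact huv.1 hx hy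

/-- for `x < y` in a finite poset, an element lies in the centralizer of `e_A`
for every subset `A` containing `x` and `y` iff it equals its diagonal plus its `(x,y)` entry
times `e_{xy}`. -/
theorem stmt_11 {X : Type*} [PartialOrder X] [Fintype X] [LocallyFiniteOrder X] [DecidableEq X]
    {R : Type*} [CommRing R]
    {x y : X} (hxy : x < y) (f : IncidenceAlgebra R X) :
    (∀ A : Set X, x ∈ A → y ∈ A → f * eSet A = eSet A * f) ↔
      f = diagPart f + f x y • eSingle x y hxy.le :=
  stmt_11_general hxy f
end
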